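/- Fix β with 1/3 ≤ β ≤ 1. If g is analytic and univalent on the unit disk with g(0)=0, g'(0)=1, and |arg(z g'(z)/g(z))| < πβ/2 for all nonzero z in the unit disk, and g(z) = z + b₂z² + b₃z³ + ..., then |b₂² − b₃²| ≤ 9β⁴ + 4β². -/

import Mathlib

open Complex Metric Set Real

private lemma aux_ball0' : (0:ℂ) ∈ ball (0:ℂ) 1 := mem_ball_self one_pos

private lemma aux_deriv_congr' {f F : ℂ → ℂ} {s : Set ℂ} (hs : IsOpen s)
    (hEq : Set.EqOn f F s) {z : ℂ} (hz : z ∈ s) : deriv f z = deriv F z :=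
  Filter.EventuallyEq.deriv_eq (Filter.eventuallyEq_of_mem (hs.mem_nhds hz) hEq)

private lemma schwarz_coeff2 {φ : ℂ → ℂ} (hd : DifferentiableOn ℂ φ (ball (0:ℂ) 1))
    (h0 : φ 0 = 0) (hm : Set.MapsTo φ (ball (0:ℂ) 1) (ball (0:ℂ) 1)) :
    ‖(deriv φ 0)‖ ≤ 1 ∧
    ‖(deriv (deriv φ) 0)‖ ≤ 2 * (1 - ‖(deriv φ 0)‖ ^ 2) := by
  have hm' : Set.MapsTo φ (ball (0:ℂ) 1) (ball (φ 0) 1) := by rwa [h0]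
  have hu : ‖(deriv φ 0)‖ ≤ 1 := by
    simpa using Complex.norm_deriv_le_div_of_mapsTo_ball hd (hm'.mono_right ball_subset_closedBall) one_pos
  set ψ := dslope φ 0 with hψdef
  have hψd : DifferentiableOn ℂ ψ (ball (0:ℂ) 1) :=
    (Complex.differentiableOn_dslope (isOpen_ball.mem_nhds aux_ball0')).mpr hd
  have hψle : ∀ z ∈ ball (0:ℂ) 1, ‖(ψ z)‖ ≤ 1 := fun z hz => by
    simpa using Complex.norm_dslope_le_div_of_mapsTo_ball hd (hm'.mono_right ball_subset_closedBall) hz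
  have hψ0 : ψ 0 = deriv φ 0 := dslope_same φ 0
  set u := deriv φ 0 with hudef
  set v := deriv ψ 0 with hvdef
  have hψdiff : ∀ z ∈ ball (0:ℂ) 1, DifferentiableAt ℂ ψ z := fun z hz =>
    hψd.differentiableAt (isOpen_ball.mem_nhds hz)
  have hψa : AnalyticOnNhd ℂ ψ (ball (0:ℂ) 1) := hψd.analyticOnNhd isOpen_ball
  have hφψ : φ = fun z => z * ψ z := by
    funext z
    have h := sub_smul_dslope φ 0 z
    simp only [sub_zero, smul_eq_mul, h0] at h
    rw [← h]
  have hdφ : Set.EqOn (deriv φ) (fun z => ψ z + z * deriv ψ z) (ball (0:ℂ) 1) := by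
    intro z hz
    have h1 : HasDerivAt (fun w => w * ψ w) (1 * ψ z + z * deriv ψ z) z :=
      (hasDerivAt_id z).mul ((hψdiff z hz).hasDerivAt)
    rw [← hφψ] at h1
    rw [h1.deriv]; ring
  have hderiv2 : deriv (deriv φ) 0 = 2 * v := by
    have h3 : deriv (deriv φ) 0 = deriv (fun z => ψ z + z * deriv ψ z) 0 :=
      aux_deriv_congr' isOpen_ball hdφ aux_ball0'
    have hψ'd : DifferentiableAt ℂ (deriv ψ) 0 := (hψa.deriv 0 aux_ball0').differentiableAt
    have h4 : HasDerivAt (fun z => ψ z + z * deriv ψ z)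
        (v + (1 * deriv ψ 0 + 0 * deriv (deriv ψ) 0)) 0 :=
      ((hψdiff 0 aux_ball0').hasDerivAt).add ((hasDerivAt_id (0:ℂ)).mul hψ'd.hasDerivAt)
    rw [h3, h4.deriv]; ring
  refine ⟨hu, ?_⟩
  rcases le_or_gt 1 (‖u‖) with hcase | hcase
  · have huu : ‖u‖ = 1 := le_antisymm hu hcase
    have hmax : IsMaxOn (norm ∘ ψ) (ball (0:ℂ) 1) 0 := by
      intro z hz
      simp only [Function.comp_apply, hψ0, ← hudef, huu]
      exact hψle z hz
    have hconst := Complex.eqOn_of_isPreconnected_of_isMaxOn_norm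
      (convex_ball (0:ℂ) 1).isPreconnected isOpen_ball hψd aux_ball0' hmax
    have hv0 : v = 0 := by
      have hev : ψ =ᶠ[nhds (0:ℂ)] fun _ => ψ 0 :=
        Filter.eventuallyEq_of_mem (isOpen_ball.mem_nhds aux_ball0') fun z hz => hconst hz
      rw [hvdef, hev.deriv_eq, deriv_const]
    rw [hderiv2, hv0, huu]
    simp
  · -- |u| < 1
    have hnsqu : Complex.normSq u < 1 := by
      rw [← Complex.sq_norm]; nlinarith [norm_nonneg u]
    have hden : ∀ z ∈ ball (0:ℂ) 1, (1 : ℂ) - (starRingEnd ℂ) u * ψ z ≠ 0 := by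
      intro z hz h
      have habs : ‖((starRingEnd ℂ) u * ψ z)‖ < 1 := by
        rw [norm_mul, Complex.norm_conj]
        calc ‖u‖ * ‖(ψ z)‖ ≤ ‖u‖ * 1 :=
              mul_le_mul_of_nonneg_left (hψle z hz) (norm_nonneg u)
          _ = ‖u‖ := mul_one _
          _ < 1 := hcase
      have : (starRingEnd ℂ) u * ψ z = 1 := by linear_combination -h
      rw [this] at habs; simp at habs
    set χ := fun z => (ψ z - u) / (1 - (starRingEnd ℂ) u * ψ z) with hχdef
    have hχd : DifferentiableOn ℂ χ (ball (0:ℂ) 1) :=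
      (hψd.sub_const u).div
        ((differentiableOn_const 1).sub ((differentiableOn_const _).mul hψd)) hden
    have hχ0 : χ 0 = 0 := by
      simp only [hχdef, hψ0, ← hudef, sub_self, zero_div]
    have hχle : ∀ z ∈ ball (0:ℂ) 1, ‖(χ z)‖ ≤ 1 := by
      intro z hz
      have hw : Complex.normSq (ψ z) ≤ 1 := by
        rw [← Complex.sq_norm]; nlinarith [hψle z hz, norm_nonneg (ψ z)]
      have expand : Complex.normSq (1 - (starRingEnd ℂ) u * ψ z) - Complex.normSq (ψ z - u)
          = (1 - Complex.normSq u) * (1 - Complex.normSq (ψ z)) := by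
        simp only [Complex.normSq_apply, Complex.sub_re, Complex.sub_im, Complex.mul_re,
          Complex.mul_im, Complex.conj_re, Complex.conj_im, Complex.one_re, Complex.one_im]
        ring
      have hns : Complex.normSq (ψ z - u) ≤ Complex.normSq (1 - (starRingEnd ℂ) u * ψ z) := by
        nlinarith
      have habs : ‖(ψ z - u)‖ ≤ ‖(1 - (starRingEnd ℂ) u * ψ z)‖ := by
        rw [Complex.norm_def, Complex.norm_def]
        exact Real.sqrt_le_sqrt hns
      have hpos : 0 < ‖(1 - (starRingEnd ℂ) u * ψ z)‖ :=
        norm_pos_iff.mpr (hden z hz)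
      rw [hχdef]
      simp only [norm_div]
      exact div_le_one_of_le₀ habs hpos.le
    have hχderiv_le : ‖(deriv χ 0)‖ ≤ 1 := by
      by_contra hcon
      push_neg at hcon
      set r := (1 + ‖(deriv χ 0)‖) / 2 with hrdef
      have hr1 : 1 < r := by rw [hrdef]; linarith
      have hmaps : Set.MapsTo χ (ball (0:ℂ) 1) (ball (χ 0) r) := by
        intro z hz
        rw [hχ0, mem_ball_zero_iff]
        calc ‖χ z‖ ≤ 1 := hχle z hz
          _ < r := hr1
      have := Complex.norm_deriv_le_div_of_mapsTo_ball hχd (hmaps.mono_right ball_subset_closedBall) one_pos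
      rw [div_one] at this
      rw [hrdef] at this
      linarith
    -- compute deriv χ 0
    have hψderiv0 : HasDerivAt ψ v 0 := (hψdiff 0 aux_ball0').hasDerivAt
    have hD : HasDerivAt (fun z => (1:ℂ) - (starRingEnd ℂ) u * ψ z)
        (0 - (starRingEnd ℂ) u * v) 0 :=
      (hasDerivAt_const 0 (1:ℂ)).sub (hψderiv0.const_mul _)
    have hN : HasDerivAt (fun z => ψ z - u) v 0 := hψderiv0.sub_const u
    have hD0 : (1:ℂ) - (starRingEnd ℂ) u * ψ 0 ≠ 0 := hden 0 aux_ball0'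
    have hχhd : HasDerivAt χ
        ((v * ((1:ℂ) - (starRingEnd ℂ) u * ψ 0) - (ψ 0 - u) * (0 - (starRingEnd ℂ) u * v)) /
          ((1:ℂ) - (starRingEnd ℂ) u * ψ 0) ^ 2) 0 := hN.div hD hD0
    have hψ0u : ψ 0 - u = 0 := by rw [hψ0]; ring
    have hD0u : (1:ℂ) - (starRingEnd ℂ) u * u ≠ 0 := by
      rw [← hψ0] at *; exact hD0
    have hχderiv : deriv χ 0 = v / ((1:ℂ) - (starRingEnd ℂ) u * u) := by
      rw [hχhd.deriv, hψ0u, hψ0]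
      field_simp
      ring
    have hD0val : (1:ℂ) - (starRingEnd ℂ) u * u = ((1 - Complex.normSq u : ℝ) : ℂ) := by
      rw [Complex.ofReal_sub, Complex.ofReal_one]
      congr 1
      rw [mul_comm, Complex.mul_conj]
    have habsD0 : ‖((1:ℂ) - (starRingEnd ℂ) u * u)‖ = 1 - Complex.normSq u := by
      rw [hD0val, Complex.norm_real, Real.norm_eq_abs, _root_.abs_of_nonneg (by linarith)]
    have hvle : ‖v‖ ≤ 1 - Complex.normSq u := by
      have hpos : (0:ℝ) < 1 - Complex.normSq u := by linarith
      have h1 : ‖v‖ = ‖(deriv χ 0)‖ * (1 - Complex.normSq u) := by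
        rw [hχderiv, norm_div, habsD0, div_mul_cancel₀ _ (ne_of_gt hpos)]
      rw [h1]
      calc ‖(deriv χ 0)‖ * (1 - Complex.normSq u)
          ≤ 1 * (1 - Complex.normSq u) :=
            mul_le_mul_of_nonneg_right hχderiv_le (by linarith)
        _ = 1 - Complex.normSq u := one_mul _
    rw [hderiv2]
    rw [norm_mul]
    simp only [Complex.norm_two]
    have : ‖u‖ ^ 2 = Complex.normSq u := Complex.sq_norm u
    rw [this]
    linarith


set_option maxHeartbeats 1000000 in
theorem toeplitz_T22_strongly_starlike (β : ℝ) (hβ0 : 1/3 ≤ β) (hβ1 : β ≤ 1)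
    (g : ℂ → ℂ)
    (hg : DifferentiableOn ℂ g (ball (0:ℂ) 1))
    (hinj : Set.InjOn g (ball (0:ℂ) 1))
    (h0 : g 0 = 0) (h1 : deriv g 0 = 1)
    (hst : ∀ z ∈ ball (0:ℂ) 1, z ≠ 0 →
      |Complex.arg (z * deriv g z / g z)| < Real.pi * β / 2) :
    ‖((iteratedDeriv 2 g 0 / 2) ^ 2 - (iteratedDeriv 3 g 0 / 6) ^ 2)‖
      ≤ 9 * β ^ 4 + 4 * β ^ 2 := by
  have b0 := aux_ball0'
  have hβpos : (0:ℝ) < β := lt_of_lt_of_le (by norm_num) hβ0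
  have hga : AnalyticOnNhd ℂ g (ball (0:ℂ) 1) := hg.analyticOnNhd isOpen_ball
  set G := dslope g 0 with hGdef
  have hGd : DifferentiableOn ℂ G (ball (0:ℂ) 1) :=
    (Complex.differentiableOn_dslope (isOpen_ball.mem_nhds b0)).mpr hg
  have hG0 : G 0 = 1 := by rw [hGdef, dslope_same, h1]
  have hzG : ∀ z : ℂ, z * G z = g z := by
    intro z
    have h := sub_smul_dslope g 0 z
    simpa [h0, smul_eq_mul] using h
  have hgne : ∀ z ∈ ball (0:ℂ) 1, z ≠ 0 → g z ≠ 0 := by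
    intro z hz hz0 hgz
    exact hz0 (hinj hz b0 (by rw [hgz, h0]))
  have hGne : ∀ z ∈ ball (0:ℂ) 1, G z ≠ 0 := by
    intro z hz
    rcases eq_or_ne z 0 with rfl | hz0
    · rw [hG0]; exact one_ne_zero
    · intro hGz
      exact hgne z hz hz0 (by rw [← hzG z, hGz, mul_zero])
  have hGa : AnalyticOnNhd ℂ G (ball (0:ℂ) 1) := hGd.analyticOnNhd isOpen_ball
  set P := fun z => deriv g z / G z with hPdef
  have hPd : DifferentiableOn ℂ P (ball (0:ℂ) 1) :=
    (hga.deriv.differentiableOn).div hGd hGne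
  have hP0 : P 0 = 1 := by rw [hPdef]; simp [h1, hG0]
  have hPval : ∀ z ∈ ball (0:ℂ) 1, z ≠ 0 → P z = z * deriv g z / g z := by
    intro z hz hz0
    rw [hPdef]
    simp only
    rw [← hzG z]
    field_simp [hGne z hz]
  have hParg : ∀ z ∈ ball (0:ℂ) 1, |Complex.arg (P z)| < Real.pi * β / 2 := by
    intro z hz
    rcases eq_or_ne z 0 with rfl | hz0
    · rw [hP0]
      simp only [Complex.arg_one, abs_zero]
      positivity
    · rw [hPval z hz hz0]
      exact hst z hz hz0
  have hPre0 : ∀ z ∈ ball (0:ℂ) 1, 0 ≤ (P z).re := by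
    intro z hz
    refine Complex.abs_arg_le_pi_div_two_iff.mp (le_trans (hParg z hz).le ?_)
    have := Real.pi_pos
    nlinarith
  have hPa : AnalyticOnNhd ℂ P (ball (0:ℂ) 1) := hPd.analyticOnNhd isOpen_ball
  have hPre : ∀ z ∈ ball (0:ℂ) 1, 0 < (P z).re := by
    rcases hPa.is_constant_or_isOpen (convex_ball (0:ℂ) 1).isPreconnected with ⟨w, hw⟩ | hopen
    · intro z hz
      have h1' : P z = w := hw z hz
      have h2' : P 0 = w := hw 0 b0
      rw [h1', ← h2', hP0]
      norm_num
    · intro z hz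
      have himg : IsOpen (P '' ball (0:ℂ) 1) := hopen _ Subset.rfl isOpen_ball
      have hmem : P z ∈ P '' ball (0:ℂ) 1 := ⟨z, hz, rfl⟩
      rcases Metric.isOpen_iff.mp himg _ hmem with ⟨ε, hε, hball⟩
      by_contra hcon
      push_neg at hcon
      have hre0 : (P z).re = 0 := le_antisymm hcon (hPre0 z hz)
      have hmem2 : P z - (ε/2 : ℝ) ∈ ball (P z) ε := by
        rw [mem_ball, dist_eq_norm]
        simp only [sub_sub_cancel_left, norm_neg, Complex.norm_real, Real.norm_eq_abs]
        rw [abs_of_pos (by linarith)]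
        linarith
      rcases hball hmem2 with ⟨y, hy, hyeq⟩
      have := hPre0 y hy
      rw [hyeq] at this
      simp only [Complex.sub_re, Complex.ofReal_re, hre0] at this
      linarith
  have hPne : ∀ z ∈ ball (0:ℂ) 1, P z ≠ 0 := by
    intro z hz h
    have := hPre z hz
    rw [h] at this
    simp at this
  have hPslit : ∀ z ∈ ball (0:ℂ) 1, P z ∈ Complex.slitPlane := fun z hz =>
    Complex.mem_slitPlane_iff.mpr (Or.inl (hPre z hz))
  set c : ℂ := ((β:ℂ))⁻¹ with hcdef
  have hβC : (β:ℂ) ≠ 0 := Complex.ofReal_ne_zero.mpr (ne_of_gt hβpos)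
  have hc0 : c ≠ 0 := inv_ne_zero hβC
  set Q := fun z => P z ^ c with hQdef
  have hQder : ∀ z ∈ ball (0:ℂ) 1,
      HasDerivAt Q (c * P z ^ (c - 1) * deriv P z) z := by
    intro z hz
    exact HasDerivAt.cpow_const
      ((hPd.differentiableAt (isOpen_ball.mem_nhds hz)).hasDerivAt) (hPslit z hz)
  have hQd : DifferentiableOn ℂ Q (ball (0:ℂ) 1) := fun z hz =>
    ((hQder z hz).differentiableAt).differentiableWithinAt
  have hQ0 : Q 0 = 1 := by rw [hQdef]; simp only; rw [hP0, one_cpow]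
  have hQre : ∀ z ∈ ball (0:ℂ) 1, 0 < (Q z).re := by
    intro z hz
    rw [hQdef]
    simp only
    rw [Complex.cpow_def_of_ne_zero (hPne z hz)]
    rw [Complex.exp_re]
    have him : (Complex.log (P z) * c).im = Complex.arg (P z) * β⁻¹ := by
      rw [hcdef, ← Complex.ofReal_inv]
      rw [Complex.mul_im]
      simp [Complex.log_im]
    rw [him]
    have hcos : 0 < Real.cos (Complex.arg (P z) * β⁻¹) := by
      apply Real.cos_pos_of_mem_Ioo
      constructor
      · have := hParg z hz
        rw [abs_lt] at this
        have h2 : -(Real.pi * β / 2) * β⁻¹ < Complex.arg (P z) * β⁻¹ := by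
          apply mul_lt_mul_of_pos_right this.1 (by positivity)
        calc -(Real.pi/2) = -(Real.pi * β / 2) * β⁻¹ := by field_simp
          _ < _ := h2
      · have := hParg z hz
        rw [abs_lt] at this
        have h2 : Complex.arg (P z) * β⁻¹ < (Real.pi * β / 2) * β⁻¹ :=
          mul_lt_mul_of_pos_right this.2 (by positivity)
        calc Complex.arg (P z) * β⁻¹ < (Real.pi * β / 2) * β⁻¹ := h2
          _ = Real.pi/2 := by field_simp
    positivity
  have hQ1ne : ∀ z ∈ ball (0:ℂ) 1, Q z + 1 ≠ 0 := by
    intro z hz h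
    have : (Q z + 1).re = 0 := by rw [h]; simp
    rw [Complex.add_re, Complex.one_re] at this
    have := hQre z hz
    linarith
  set Φ := fun z => (Q z - 1) / (Q z + 1) with hΦdef
  have hΦd : DifferentiableOn ℂ Φ (ball (0:ℂ) 1) :=
    (hQd.sub_const 1).div (hQd.add_const 1) hQ1ne
  have hΦ0 : Φ 0 = 0 := by rw [hΦdef]; simp only; rw [hQ0]; simp
  have hΦmaps : Set.MapsTo Φ (ball (0:ℂ) 1) (ball (0:ℂ) 1) := by
    intro z hz
    rw [mem_ball_zero_iff]
    have hlt : Complex.normSq (Q z - 1) < Complex.normSq (Q z + 1) := by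
      have hre := hQre z hz
      simp only [Complex.normSq_apply, Complex.sub_re, Complex.sub_im, Complex.add_re,
        Complex.add_im, Complex.one_re, Complex.one_im]
      nlinarith
    have habs : ‖(Q z - 1)‖ < ‖(Q z + 1)‖ := by
      rw [Complex.norm_def, Complex.norm_def]
      exact Real.sqrt_lt_sqrt (Complex.normSq_nonneg _) hlt
    have hpos : 0 < ‖(Q z + 1)‖ := norm_pos_iff.mpr (hQ1ne z hz)
    rw [hΦdef]
    simp only [norm_div]
    rw [div_lt_one hpos]
    exact habs
  have hΦdiff : ∀ z ∈ ball (0:ℂ) 1, DifferentiableAt ℂ Φ z := fun z hz =>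
    hΦd.differentiableAt (isOpen_ball.mem_nhds hz)
  have hΦa : AnalyticOnNhd ℂ Φ (ball (0:ℂ) 1) := hΦd.analyticOnNhd isOpen_ball
  have hΦne : ∀ z ∈ ball (0:ℂ) 1, (1:ℂ) - Φ z ≠ 0 := by
    intro z hz h
    have : ‖(Φ z)‖ < 1 := mem_ball_zero_iff.mp (hΦmaps hz)
    have h2 : Φ z = 1 := by linear_combination -h
    rw [h2] at this; simp at this
  have hQΦ : Set.EqOn Q (fun z => (1 + Φ z) / (1 - Φ z)) (ball (0:ℂ) 1) := by
    intro z hz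
    show Q z = (1 + Φ z) / (1 - Φ z)
    have key : 1 + Φ z = Q z * (1 - Φ z) := by
      rw [hΦdef]
      simp only
      field_simp [hQ1ne z hz]
      ring
    rw [key, mul_div_assoc, div_self (hΦne z hz), mul_one]
  have hdQ : Set.EqOn (deriv Q) (fun z => 2 * deriv Φ z / (1 - Φ z)^2)
      (ball (0:ℂ) 1) := by
    intro z hz
    have hQz := aux_deriv_congr' isOpen_ball hQΦ hz
    have hN : HasDerivAt (fun y => 1 + Φ y) (deriv Φ z) z :=
      (hΦdiff z hz).hasDerivAt.const_add 1
    have hD : HasDerivAt (fun y => (1:ℂ) - Φ y) (-(deriv Φ z)) z :=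
      (hΦdiff z hz).hasDerivAt.const_sub 1
    have hdiv := hN.fun_div hD (hΦne z hz)
    rw [hQz, hdiv.deriv]
    simp only
    field_simp
    ring
  set u := deriv Φ 0 with hudef
  set w := deriv (deriv Φ) 0 with hwdef
  have hq1 : deriv Q 0 = 2 * u := by
    rw [hdQ b0]
    simp only [hΦ0, ← hudef]
    norm_num
  have hq2 : deriv (deriv Q) 0 = 2 * w + 4 * u^2 := by
    have h3 : deriv (deriv Q) 0 = deriv (fun z => 2 * deriv Φ z / (1 - Φ z)^2) 0 :=
      aux_deriv_congr' isOpen_ball hdQ b0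
    have hN : HasDerivAt (fun z => 2 * deriv Φ z) (2 * w) 0 :=
      ((hΦa.deriv 0 b0).differentiableAt.hasDerivAt).const_mul 2
    have hDbase : HasDerivAt (fun y => (1:ℂ) - Φ y) (-u) 0 :=
      (hΦdiff 0 b0).hasDerivAt.const_sub 1
    have hD : HasDerivAt (fun y => ((1:ℂ) - Φ y)^2)
        (2 * ((1:ℂ) - Φ 0)^1 * (-u)) 0 := by
      simpa using hDbase.fun_pow 2
    have hD0 : ((1:ℂ) - Φ 0)^2 ≠ 0 := pow_ne_zero 2 (hΦne 0 b0)
    have hdiv := hN.fun_div hD hD0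
    rw [h3, hdiv.deriv, hΦ0]
    rw [hΦ0] at *
    norm_num
    ring
  have hdQ2 : Set.EqOn (deriv Q) (fun z => c * P z ^ (c - 1) * deriv P z)
      (ball (0:ℂ) 1) := fun z hz => (hQder z hz).deriv
  have hp1 : deriv P 0 = 2 * (β:ℂ) * u := by
    have heq := (hdQ2 b0).symm.trans hq1
    simp only [hP0, one_cpow, hcdef] at heq
    field_simp at heq
    linear_combination heq
  have hq2' : deriv (deriv Q) 0 = c * ((c - 1) * (deriv P 0)^2 + deriv (deriv P) 0) := by
    have h3 : deriv (deriv Q) 0 = deriv (fun z => c * P z ^ (c - 1) * deriv P z) 0 :=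
      aux_deriv_congr' isOpen_ball hdQ2 b0
    have hPder0 : HasDerivAt P (deriv P 0) 0 :=
      (hPd.differentiableAt (isOpen_ball.mem_nhds b0)).hasDerivAt
    have hA : HasDerivAt (fun z => c * P z ^ (c - 1))
        (c * ((c - 1) * P 0 ^ (c - 1 - 1) * deriv P 0)) 0 :=
      (hPder0.cpow_const (hPslit 0 b0)).const_mul c
    have hB : HasDerivAt (fun z => deriv P z) (deriv (deriv P) 0) 0 :=
      (hPa.deriv 0 b0).differentiableAt.hasDerivAt
    have hprod := hA.fun_mul hB
    rw [h3, hprod.deriv, hP0, one_cpow, one_cpow]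
    ring
  have hp2 : deriv (deriv P) 0 = 2 * (β:ℂ) * w + 4 * (β:ℂ)^2 * u^2 := by
    have heq := hq2'.symm.trans hq2
    rw [hp1, hcdef] at heq
    field_simp at heq
    have h2 : deriv (deriv P) 0 * (β:ℂ) = (2*(β:ℂ)*w + 4*(β:ℂ)^2*u^2) * (β:ℂ) := by
      linear_combination (β:ℂ) * heq
    exact mul_right_cancel₀ hβC h2
  have hGdiff : ∀ z ∈ ball (0:ℂ) 1, DifferentiableAt ℂ G z := fun z hz =>
    hGd.differentiableAt (isOpen_ball.mem_nhds hz)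
  have hgfun : g = fun z => z * G z := funext fun z => (hzG z).symm
  have hdg : Set.EqOn (deriv g) (fun z => G z + z * deriv G z) (ball (0:ℂ) 1) := by
    intro z hz
    have h1' : HasDerivAt (fun y => y * G y) (1 * G z + z * deriv G z) z :=
      (hasDerivAt_id z).mul (hGdiff z hz).hasDerivAt
    rw [← hgfun] at h1'
    rw [h1'.deriv]; ring
  have hPg : Set.EqOn (deriv g) (fun z => G z * P z) (ball (0:ℂ) 1) := by
    intro z hz
    rw [hPdef]
    simp only
    rw [mul_comm (G z), div_mul_cancel₀ _ (hGne z hz)]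
  have hS1 : ∀ z ∈ ball (0:ℂ) 1,
      deriv G z * P z + G z * deriv P z - (2 * deriv G z + z * deriv (deriv G) z) = 0 := by
    intro z hz
    have hGP : Set.EqOn (fun z => G z * P z - (G z + z * deriv G z)) (fun _ => (0:ℂ))
        (ball (0:ℂ) 1) := by
      intro y hy
      have e1 : deriv g y = G y * P y := hPg hy
      have e2 : deriv g y = G y + y * deriv G y := hdg hy
      simp only
      rw [← e1, e2]
      ring
    have hd0 : deriv (fun z => G z * P z - (G z + z * deriv G z)) z
        = deriv (fun _ => (0:ℂ)) z := aux_deriv_congr' isOpen_ball hGP hz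
    rw [deriv_const] at hd0
    have hGder : HasDerivAt G (deriv G z) z := (hGdiff z hz).hasDerivAt
    have hPder : HasDerivAt P (deriv P z) z :=
      (hPd.differentiableAt (isOpen_ball.mem_nhds hz)).hasDerivAt
    have hG'der : HasDerivAt (fun y => deriv G y) (deriv (deriv G) z) z :=
      (hGa.deriv z hz).differentiableAt.hasDerivAt
    have hhd : HasDerivAt (fun z => G z * P z - (G z + z * deriv G z))
        ((deriv G z * P z + G z * deriv P z) -
          (deriv G z + (1 * deriv G z + z * deriv (deriv G) z))) z :=
      (hGder.mul hPder).sub (hGder.add ((hasDerivAt_id z).mul hG'der))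
    rw [hhd.deriv] at hd0
    linear_combination hd0
  have hG1 : deriv G 0 = deriv P 0 := by
    have := hS1 0 b0
    rw [hG0, hP0] at this
    linear_combination -this
  have hG2 : 2 * deriv (deriv G) 0 = 2 * (deriv P 0)^2 + deriv (deriv P) 0 := by
    have hT : Set.EqOn
        (fun z => deriv G z * P z + G z * deriv P z - (2 * deriv G z + z * deriv (deriv G) z))
        (fun _ => (0:ℂ)) (ball (0:ℂ) 1) := fun z hz => hS1 z hz
    have hd0 : deriv (fun z => deriv G z * P z + G z * deriv P z -
        (2 * deriv G z + z * deriv (deriv G) z)) 0 = 0 := by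
      rw [aux_deriv_congr' isOpen_ball hT b0, deriv_const]
    have hG'0 : HasDerivAt (fun y => deriv G y) (deriv (deriv G) 0) 0 :=
      (hGa.deriv 0 b0).differentiableAt.hasDerivAt
    have hG''0 : HasDerivAt (fun y => deriv (deriv G) y) (deriv (deriv (deriv G)) 0) 0 :=
      (hGa.deriv.deriv 0 b0).differentiableAt.hasDerivAt
    have hP'0 : HasDerivAt (fun y => deriv P y) (deriv (deriv P) 0) 0 :=
      (hPa.deriv 0 b0).differentiableAt.hasDerivAt
    have hG00 : HasDerivAt G (deriv G 0) 0 := (hGdiff 0 b0).hasDerivAt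
    have hP00 : HasDerivAt P (deriv P 0) 0 :=
      (hPd.differentiableAt (isOpen_ball.mem_nhds b0)).hasDerivAt
    have hhd : HasDerivAt (fun z => deriv G z * P z + G z * deriv P z -
        (2 * deriv G z + z * deriv (deriv G) z))
        ((deriv (deriv G) 0 * P 0 + deriv G 0 * deriv P 0) +
          (deriv G 0 * deriv P 0 + G 0 * deriv (deriv P) 0) -
          (2 * deriv (deriv G) 0 + (1 * deriv (deriv G) 0 + 0 * deriv (deriv (deriv G)) 0))) 0 :=
      ((hG'0.mul hP00).add (hG00.mul hP'0)).sub
        ((hG'0.const_mul 2).add ((hasDerivAt_id 0).mul hG''0))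
    rw [hhd.deriv] at hd0
    rw [hG0, hP0, hG1] at hd0
    linear_combination -hd0
  -- iterated derivatives of g
  have hG'0 : HasDerivAt (fun y => deriv G y) (deriv (deriv G) 0) 0 :=
    (hGa.deriv 0 b0).differentiableAt.hasDerivAt
  have hG''0 : HasDerivAt (fun y => deriv (deriv G) y) (deriv (deriv (deriv G)) 0) 0 :=
    (hGa.deriv.deriv 0 b0).differentiableAt.hasDerivAt
  have hdg2 : Set.EqOn (deriv (deriv g))
      (fun z => 2 * deriv G z + z * deriv (deriv G) z) (ball (0:ℂ) 1) := by
    intro z hz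
    rw [aux_deriv_congr' isOpen_ball hdg hz]
    have hhd : HasDerivAt (fun y => G y + y * deriv G y)
        (deriv G z + (1 * deriv G z + z * deriv (deriv G) z)) z :=
      (hGdiff z hz).hasDerivAt.add
        ((hasDerivAt_id z).mul ((hGa.deriv z hz).differentiableAt.hasDerivAt))
    rw [hhd.deriv]
    show _ = 2 * deriv G z + z * deriv (deriv G) z
    ring
  have i2 : iteratedDeriv 2 g 0 = 2 * deriv G 0 := by
    have e : iteratedDeriv 2 g 0 = deriv (deriv g) 0 := by
      rw [iteratedDeriv_succ, iteratedDeriv_one]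
    have e2 : deriv (deriv g) 0 = 2 * deriv G 0 + 0 * deriv (deriv G) 0 := hdg2 b0
    rw [e, e2]; ring
  have i3 : iteratedDeriv 3 g 0 = 3 * deriv (deriv G) 0 := by
    have e : iteratedDeriv 3 g 0 = deriv (deriv (deriv g)) 0 := by
      rw [iteratedDeriv_succ, iteratedDeriv_succ, iteratedDeriv_one]
    have d : deriv (deriv (deriv g)) 0
        = deriv (fun z => 2 * deriv G z + z * deriv (deriv G) z) 0 :=
      aux_deriv_congr' isOpen_ball hdg2 b0
    have hhd : HasDerivAt (fun z => 2 * deriv G z + z * deriv (deriv G) z)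
        (2 * deriv (deriv G) 0 + (1 * deriv (deriv G) 0 + 0 * deriv (deriv (deriv G)) 0)) 0 :=
      (hG'0.const_mul 2).add ((hasDerivAt_id 0).mul hG''0)
    rw [e, d, hhd.deriv]; ring
  -- coefficient values
  have hb2 : iteratedDeriv 2 g 0 / 2 = 2 * (β:ℂ) * u := by
    rw [i2, hG1, hp1]; ring
  have hG2v : deriv (deriv G) 0 = 6 * (β:ℂ)^2 * u^2 + (β:ℂ) * w := by
    have h' := hG2
    rw [hp1, hp2] at h'
    linear_combination h' / 2
  have hb3 : iteratedDeriv 3 g 0 / 6 = 3 * (β:ℂ)^2 * u^2 + (β:ℂ) * w / 2 := by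
    rw [i3, hG2v]; ring
  -- Schwarz bounds
  obtain ⟨hu, hw⟩ := schwarz_coeff2 hΦd hΦ0 hΦmaps
  rw [← hudef] at hu
  rw [← hudef, ← hwdef] at hw
  -- final estimate
  clear_value u w
  rw [hb2, hb3]
  set a := ‖u‖ with hadef
  set b := ‖w‖ with hbdef
  clear_value a
  have ha0 : 0 ≤ a := by rw [hadef]; exact norm_nonneg u
  clear_value b
  have hb0 : 0 ≤ b := by rw [hbdef]; exact norm_nonneg w
  have habsβ : ‖((β:ℂ))‖ = β := by
    rw [Complex.norm_real, Real.norm_eq_abs, _root_.abs_of_pos hβpos]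
  have hx : ‖(2 * (β:ℂ) * u)‖ = 2 * β * a := by
    rw [norm_mul, norm_mul, habsβ, Complex.norm_two, hadef]
  have hy : ‖(3 * (β:ℂ)^2 * u^2 + (β:ℂ) * w / 2)‖ ≤ 3 * β^2 * a^2 + β * b / 2 := by
    calc ‖(3 * (β:ℂ)^2 * u^2 + (β:ℂ) * w / 2)‖
        ≤ ‖(3 * (β:ℂ)^2 * u^2)‖ + ‖((β:ℂ) * w / 2)‖ :=
          norm_add_le _ _
      _ = 3 * β^2 * a^2 + β * b / 2 := by
          rw [norm_mul, norm_mul, norm_div, norm_mul, norm_pow, habsβ]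
          simp only [hadef, hbdef, Complex.norm_two, Complex.norm_ofNat, norm_pow]
  have hyb : ‖(3 * (β:ℂ)^2 * u^2 + (β:ℂ) * w / 2)‖ ≤ 3 * β^2 := by
    refine le_trans hy ?_
    have h1 : b ≤ 2 * (1 - a^2) := hw
    have ha1 : a ≤ 1 := hu
    have e1 : 0 ≤ (3*β^2 - β) * (1 - a^2) := by
      apply mul_nonneg
      · nlinarith
      · nlinarith
    have e2 : β * b ≤ β * (2*(1-a^2)) := mul_le_mul_of_nonneg_left h1 hβpos.le
    nlinarith
  calc ‖((2 * (β:ℂ) * u)^2 - (3 * (β:ℂ)^2 * u^2 + (β:ℂ) * w / 2)^2)‖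
      ≤ ‖((2 * (β:ℂ) * u)^2)‖
        + ‖((3 * (β:ℂ)^2 * u^2 + (β:ℂ) * w / 2)^2)‖ := by
        have := norm_sub_le ((2 * (β:ℂ) * u)^2) ((3 * (β:ℂ)^2 * u^2 + (β:ℂ) * w / 2)^2)
        simpa using this
    _ ≤ 9 * β ^ 4 + 4 * β ^ 2 := by
        rw [norm_pow, norm_pow, hx]
        have h1 : (2 * β * a)^2 ≤ 4 * β^2 := by nlinarith [hu]
        have h2 : ‖(3 * (β:ℂ)^2 * u^2 + (β:ℂ) * w / 2)‖ ^ 2 ≤ (3*β^2)^2 := by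
          apply pow_le_pow_left₀ (norm_nonneg _) hyb
        nlinarith
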